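/- Let a = (a_j)_{j≥1} be a nonincreasing sequence of positive numbers with Σ a_j = 1. Then the measure ρ = Σ_{k=1}^{n+1} (Σ_{j≥0} a_{k+j(n+1)}) δ_{e^{2πik/(n+1)}} satisfies e_n(ρ)² ≥ (n+1) Σ_{j≥1} a_{j(n+1)}. Consequently, sup over choices of atoms (λ_j) ⊂ 𝕋 of e_n(Σ_j a_j δ_{λ_j})² is at least (n+1) Σ_{j≥1} a_{j(n+1)}, and in particular at least (n+1) a_{n+1}. -/

import Mathlib

open MeasureTheory Complex Polynomial

/-- The squared Szegő minimum `e_n(ρ)²`. -/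
noncomputable def szegoE2 (ρ : Measure ℂ) (n : ℕ) : ℝ :=
  sInf { x | ∃ q : Polynomial ℂ, q.Monic ∧ q.natDegree = n ∧
    x = ∫ z, ‖q.eval z‖ ^ 2 ∂ρ }

/-!
Let `ζ` be a primitive `(n+1)`-st root of unity. For a monic `q` of degree `n`, orthogonality of
the powers of `ζ` gives `∑ₖ ζᵏ q(ζᵏ) = n + 1` (only the leading coefficient survives), so the
triangle and Cauchy–Schwarz inequalities give `∑ₖ |q(ζᵏ)|² ≥ n + 1`. Since `a` is nonincreasing,
the mass `∑_{j≥0} a_{k+j(n+1)}` of every atom of `ρ` is at least `S = ∑_{j≥1} a_{j(n+1)}`, whence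
`∫ |q|² dρ ≥ S ∑ₖ |q(ζᵏ)|² ≥ (n+1) S`. Grouping the atoms of `∑ⱼ aⱼ δ_{ζʲ}` by residue class
mod `n + 1` gives `ρ`, so `ρ` competes in the supremum; the supremum is finite because every
competitor is a probability measure on the circle, where `q = zⁿ` shows `e_n² ≤ 1`.
-/

open Finset

namespace IsPrimitiveRoot

section CommRing

variable {R : Type*} [CommRing R] [IsDomain R] {ζ : R} {n : ℕ}

theorem sum_pow_succ_pow_eq_zero (hζ : IsPrimitiveRoot ζ (n + 1)) {m : ℕ} (hm0 : m ≠ 0)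
    (hmn : m ≤ n) : ∑ k ∈ range (n + 1), (ζ ^ (k + 1)) ^ m = 0 := by
  have hne : ζ ^ m ≠ 1 := hζ.pow_ne_one_of_pos_of_lt hm0 (by omega)
  have hgeom : ∑ k ∈ range (n + 1), (ζ ^ m) ^ k = 0 := by
    refine eq_zero_of_ne_zero_of_mul_left_eq_zero (sub_ne_zero_of_ne hne.symm) ?_
    rw [mul_neg_geom_sum, ← pow_mul, mul_comm, pow_mul, hζ.pow_eq_one, one_pow, sub_self]
  calc ∑ k ∈ range (n + 1), (ζ ^ (k + 1)) ^ m
      = ζ ^ m * ∑ k ∈ range (n + 1), (ζ ^ m) ^ k := by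
        rw [mul_sum]
        exact sum_congr rfl fun k _ => by ring
    _ = 0 := by rw [hgeom, mul_zero]

theorem sum_pow_succ_mul_eval (hζ : IsPrimitiveRoot ζ (n + 1)) {q : R[X]} (hq : q.natDegree ≤ n) :
    ∑ k ∈ range (n + 1), ζ ^ (k + 1) * q.eval (ζ ^ (k + 1)) = (n + 1) * q.coeff n := by
  have hterm (x : R) : x * q.eval x = ∑ m ∈ range (n + 1), q.coeff m * x ^ (m + 1) := by
    rw [eval_eq_sum_range' (Nat.lt_succ_of_le hq), mul_sum]
    exact sum_congr rfl fun m _ => by ring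
  have hlow : ∀ m ∈ range n, ∑ k ∈ range (n + 1), q.coeff m * (ζ ^ (k + 1)) ^ (m + 1) = 0 :=
    fun m hm => by
      rw [← mul_sum, hζ.sum_pow_succ_pow_eq_zero m.succ_ne_zero (mem_range.mp hm), mul_zero]
  have htop (k : ℕ) : (ζ ^ (k + 1)) ^ (n + 1) = 1 := by
    rw [← pow_mul, mul_comm, pow_mul, hζ.pow_eq_one, one_pow]
  simp_rw [hterm]
  rw [sum_comm, sum_range_succ, sum_eq_zero hlow, zero_add]
  simp [htop, mul_comm]

end CommRing

theorem add_one_le_sum_norm_eval_sq {n : ℕ} {ζ : ℂ} (hζ : IsPrimitiveRoot ζ (n + 1)) {q : ℂ[X]}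
    (hq : q.Monic) (hd : q.natDegree = n) :
    (n + 1 : ℝ) ≤ ∑ k ∈ range (n + 1), ‖q.eval (ζ ^ (k + 1))‖ ^ 2 := by
  set g : ℕ → ℝ := fun k => ‖q.eval (ζ ^ (k + 1))‖
  have hζ1 : ‖ζ‖ = 1 := hζ.norm'_eq_one n.add_one_ne_zero
  have hsum : (n + 1 : ℝ) ≤ ∑ k ∈ range (n + 1), g k := calc
    (n + 1 : ℝ) = ‖∑ k ∈ range (n + 1), ζ ^ (k + 1) * q.eval (ζ ^ (k + 1))‖ := by
        rw [hζ.sum_pow_succ_mul_eval hd.le, ← hd, hq.coeff_natDegree, mul_one]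
        exact_mod_cast (RCLike.norm_natCast (K := ℂ) (q.natDegree + 1)).symm
    _ ≤ ∑ k ∈ range (n + 1), ‖ζ ^ (k + 1) * q.eval (ζ ^ (k + 1))‖ := norm_sum_le _ _
    _ = ∑ k ∈ range (n + 1), g k := by simp [g, norm_pow, hζ1]
  have hcs : (∑ k ∈ range (n + 1), g k) ^ 2 ≤ (n + 1) * ∑ k ∈ range (n + 1), g k ^ 2 := by
    simpa using sq_sum_le_card_mul_sum_sq (s := range (n + 1)) (f := g)
  have hpos : (0 : ℝ) < n + 1 := by positivity
  refine le_of_mul_le_mul_left ?_ hpos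
  calc (n + 1 : ℝ) * (n + 1) = (n + 1) ^ 2 := by ring
    _ ≤ (∑ k ∈ range (n + 1), g k) ^ 2 := pow_le_pow_left₀ hpos.le hsum 2
    _ ≤ _ := hcs

end IsPrimitiveRoot

open scoped ENNReal

namespace MeasureTheory.Measure

variable {α : Type*} [MeasurableSpace α]

theorem sum_smul_const {ι : Type*} (c : ι → ℝ≥0∞) (μ : Measure α) :
    Measure.sum (fun i => c i • μ) = (∑' i, c i) • μ := by
  ext s hs
  simp [Measure.sum_apply _ hs, ENNReal.tsum_mul_right]

theorem sum_nat_eq_sum_fin_sum (N : ℕ) [NeZero N] (μ : ℕ → Measure α) :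
    Measure.sum μ = Measure.sum fun k : Fin N => Measure.sum fun j => μ (j * N + k) := by
  rw [Measure.sum_comm, Measure.sum_sum, ← Measure.sum_comp_equiv (Nat.divModEquiv N).symm]
  rfl

theorem isProbabilityMeasure_sum_smul_dirac {ι : Type*} {w : ι → ℝ} (hw : ∀ i, 0 ≤ w i)
    (hsum : ∑' i, w i = 1) (p : ι → α) :
    IsProbabilityMeasure (Measure.sum fun i => ENNReal.ofReal (w i) • Measure.dirac (p i)) := by
  have hs : Summable w := by
    by_contra h
    simp [tsum_eq_zero_of_not_summable h] at hsum
  constructor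
  simp [Measure.sum_apply _ MeasurableSet.univ, ← ENNReal.ofReal_tsum_of_nonneg hw hs, hsum]

end MeasureTheory.Measure

theorem MeasureTheory.integral_sum_smul_dirac {ι α E : Type*} [Fintype ι] [MeasurableSpace α]
    [MeasurableSingletonClass α] [NormedAddCommGroup E] [NormedSpace ℝ E] [CompleteSpace E]
    {c : ι → ℝ≥0∞} (hc : ∀ i, c i ≠ ∞) (p : ι → α) (f : α → E) :
    ∫ x, f x ∂(Measure.sum fun i => c i • Measure.dirac (p i)) = ∑ i, (c i).toReal • f (p i) := by
  rw [Measure.sum_fintype, integral_finsetSum_measure fun i _ =>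
    (integrable_dirac enorm_lt_top).smul_measure (hc i)]
  simp [integral_smul_measure]

theorem Summable.comp_add_mul {E : Type*} [NormedAddCommGroup E] [CompleteSpace E] {f : ℕ → E}
    (hf : Summable f) (r : ℕ) {N : ℕ} (hN : N ≠ 0) : Summable fun j => f (r + j * N) :=
  hf.comp_injective fun i j hij => by
    simpa [hN] using (add_right_injective r hij : i * N = j * N)

theorem Summable.comp_succ_mul {E : Type*} [NormedAddCommGroup E] [CompleteSpace E] {f : ℕ → E}
    (hf : Summable f) {N : ℕ} (hN : N ≠ 0) : Summable fun j => f ((j + 1) * N) :=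
  (hf.comp_add_mul N hN).congr fun j => by rw [add_mul, one_mul, add_comm]

section Szego

variable {ρ : Measure ℂ} {n : ℕ}

theorem bddBelow_szegoE2_set :
    BddBelow {x | ∃ q : ℂ[X], q.Monic ∧ q.natDegree = n ∧ x = ∫ z, ‖q.eval z‖ ^ 2 ∂ρ} :=
  ⟨0, by rintro _ ⟨q, -, -, rfl⟩; exact integral_nonneg fun z => by positivity⟩

theorem szegoE2_le_integral {q : ℂ[X]} (hq : q.Monic) (hd : q.natDegree = n) :
    szegoE2 ρ n ≤ ∫ z, ‖q.eval z‖ ^ 2 ∂ρ :=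
  csInf_le bddBelow_szegoE2_set ⟨q, hq, hd, rfl⟩

theorem le_szegoE2 {c : ℝ}
    (h : ∀ q : ℂ[X], q.Monic → q.natDegree = n → c ≤ ∫ z, ‖q.eval z‖ ^ 2 ∂ρ) :
    c ≤ szegoE2 ρ n :=
  le_csInf ⟨_, X ^ n, monic_X_pow n, natDegree_X_pow n, rfl⟩ <| by
    rintro _ ⟨q, hq, hd, rfl⟩
    exact h q hq hd

theorem szegoE2_le_measureReal_univ (hρ : ∀ᵐ z ∂ρ, ‖z‖ = 1) : szegoE2 ρ n ≤ ρ.real Set.univ :=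
  calc szegoE2 ρ n ≤ ∫ z, ‖(X ^ n : ℂ[X]).eval z‖ ^ 2 ∂ρ :=
        szegoE2_le_integral (monic_X_pow n) (natDegree_X_pow n)
    _ = ∫ _, (1 : ℝ) ∂ρ := integral_congr_ae (hρ.mono fun z hz => by simp [hz])
    _ = ρ.real Set.univ := by simp

theorem szegoE2_sum_smul_dirac_le_one {ι : Type*} [Countable ι] {w : ι → ℝ} (hw : ∀ i, 0 ≤ w i)
    (hsum : ∑' i, w i = 1) {l : ι → ℂ} (hl : ∀ i, l i ∈ Metric.sphere (0 : ℂ) 1) :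
    szegoE2 (Measure.sum fun i => ENNReal.ofReal (w i) • Measure.dirac (l i)) n ≤ 1 := by
  have := Measure.isProbabilityMeasure_sum_smul_dirac hw hsum l
  have hρ : ∀ᵐ z ∂(Measure.sum fun i => ENNReal.ofReal (w i) • Measure.dirac (l i)), ‖z‖ = 1 :=
    Measure.ae_sum_iff.2 fun i => Measure.ae_smul_measure (by simpa [ae_dirac_eq] using hl i) _
  simpa using szegoE2_le_measureReal_univ hρ

theorem szegoE2_le_sSup {ι : Type*} [Countable ι] {w : ι → ℝ} (hw : ∀ i, 0 ≤ w i)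
    (hsum : ∑' i, w i = 1) {l : ι → ℂ} (hl : ∀ i, l i ∈ Metric.sphere (0 : ℂ) 1) :
    szegoE2 (Measure.sum fun i => ENNReal.ofReal (w i) • Measure.dirac (l i)) n ≤
      sSup {x | ∃ l : ι → ℂ, (∀ i, l i ∈ Metric.sphere (0 : ℂ) 1) ∧
        x = szegoE2 (Measure.sum fun i => ENNReal.ofReal (w i) • Measure.dirac (l i)) n} :=
  le_csSup ⟨1, by
      rintro _ ⟨l, hl, rfl⟩
      exact szegoE2_sum_smul_dirac_le_one hw hsum hl⟩
    ⟨l, hl, rfl⟩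

theorem IsPrimitiveRoot.mul_le_szegoE2 {ζ : ℂ} (hζ : IsPrimitiveRoot ζ (n + 1))
    {c : Fin (n + 1) → ℝ} {S : ℝ} (hS : 0 ≤ S) (hc : ∀ k, S ≤ c k) :
    (n + 1) * S ≤ szegoE2 (Measure.sum fun k : Fin (n + 1) =>
      ENNReal.ofReal (c k) • Measure.dirac (ζ ^ ((k : ℕ) + 1))) n := by
  refine le_szegoE2 fun q hq hd => ?_
  rw [integral_sum_smul_dirac fun _ => ENNReal.ofReal_ne_top]
  calc (n + 1) * S ≤ (∑ k ∈ range (n + 1), ‖q.eval (ζ ^ (k + 1))‖ ^ 2) * S :=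
        mul_le_mul_of_nonneg_right (hζ.add_one_le_sum_norm_eval_sq hq hd) hS
    _ = ∑ k : Fin (n + 1), S * ‖q.eval (ζ ^ ((k : ℕ) + 1))‖ ^ 2 := by
        rw [sum_mul, ← Fin.sum_univ_eq_sum_range (fun k => ‖q.eval (ζ ^ (k + 1))‖ ^ 2 * S)]
        simp only [mul_comm]
    _ ≤ _ := sum_le_sum fun k _ => by
        rw [ENNReal.toReal_ofReal (hS.trans (hc k)), smul_eq_mul]
        gcongr
        exact hc k

end Szego

theorem sum_smul_dirac_pow_succ_eq_sum_fin {M : Type*} [Monoid M] [MeasurableSpace M] {ζ : M}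
    {n : ℕ} (hζ : ζ ^ (n + 1) = 1) {a : ℕ → ℝ} (ha : ∀ j, 0 ≤ a (j + 1)) (hs : Summable a) :
    (Measure.sum fun j : ℕ => ENNReal.ofReal (a (j + 1)) • Measure.dirac (ζ ^ (j + 1))) =
      Measure.sum fun k : Fin (n + 1) =>
        ENNReal.ofReal (∑' j : ℕ, a ((k : ℕ) + 1 + j * (n + 1))) •
          Measure.dirac (ζ ^ ((k : ℕ) + 1)) := by
  rw [Measure.sum_nat_eq_sum_fin_sum (n + 1)]
  refine congrArg Measure.sum (funext fun k => ?_)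
  have hidx (j : ℕ) : j * (n + 1) + k + 1 = k + 1 + j * (n + 1) := by ring
  have hpow (j : ℕ) : ζ ^ (k + 1 + j * (n + 1)) = ζ ^ ((k : ℕ) + 1) := by
    rw [pow_add, mul_comm, pow_mul, hζ, one_pow, mul_one]
  have hnn (j : ℕ) : 0 ≤ a (k + 1 + j * (n + 1)) := by
    simpa [add_right_comm] using ha (k + j * (n + 1))
  rw [ENNReal.ofReal_tsum_of_nonneg hnn (hs.comp_add_mul _ n.add_one_ne_zero),
    ← Measure.sum_smul_const]
  simp only [hidx, hpow]

theorem tsum_le_tsum_residue {a : ℕ → ℝ} (hmono : ∀ j, a (j + 2) ≤ a (j + 1)) (hs : Summable a)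
    {n k : ℕ} (hk : k ≤ n) :
    ∑' j : ℕ, a ((j + 1) * (n + 1)) ≤ ∑' j : ℕ, a (k + 1 + j * (n + 1)) := by
  have hanti : Antitone fun j => a (j + 1) := antitone_nat_of_succ_le hmono
  refine Summable.tsum_le_tsum (fun j => ?_) ?_ (hs.comp_add_mul _ n.add_one_ne_zero)
  · have := hanti (show k + j * (n + 1) ≤ j * (n + 1) + n by omega)
    convert this using 2 <;> ring
  · exact hs.comp_succ_mul n.add_one_ne_zero

/-- Part (i) of the theorem on discrete measures: for a nonincreasing positive
sequence `(a_j)_{j≥1}` of sum 1 (indexed here by `a (j+1)`), the measure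
`ρ = Σ_{k=1}^{n+1} (Σ_{j≥0} a_{k+j(n+1)}) δ_{e^{2πik/(n+1)}}` satisfies
`e_n(ρ)² ≥ (n+1) Σ_{j≥1} a_{j(n+1)}`; consequently the sup of `e_n²` over
choices of atoms is at least `(n+1) Σ_{j≥1} a_{j(n+1)} ≥ (n+1) a_{n+1}`. -/
theorem stmt4 (a : ℕ → ℝ) (hpos : ∀ j, 0 < a (j + 1))
    (hmono : ∀ j, a (j + 2) ≤ a (j + 1))
    (hsum : ∑' j : ℕ, a (j + 1) = 1) (n : ℕ) :
    (n + 1 : ℝ) * (∑' j : ℕ, a ((j + 1) * (n + 1))) ≤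
        szegoE2 (Measure.sum fun k : Fin (n + 1) =>
          ENNReal.ofReal (∑' j : ℕ, a ((k : ℕ) + 1 + j * (n + 1))) •
            Measure.dirac (Complex.exp
              (2 * Real.pi * Complex.I * ((k : ℕ) + 1) / (n + 1)))) n ∧
      (n + 1 : ℝ) * (∑' j : ℕ, a ((j + 1) * (n + 1))) ≤
        sSup { x | ∃ l : ℕ → ℂ, (∀ j, l j ∈ Metric.sphere (0 : ℂ) 1) ∧
          x = szegoE2 (Measure.sum fun j : ℕ =>
            ENNReal.ofReal (a (j + 1)) • Measure.dirac (l j)) n } ∧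
      (n + 1 : ℝ) * a (n + 1) ≤
        sSup { x | ∃ l : ℕ → ℂ, (∀ j, l j ∈ Metric.sphere (0 : ℂ) 1) ∧
          x = szegoE2 (Measure.sum fun j : ℕ =>
            ENNReal.ofReal (a (j + 1)) • Measure.dirac (l j)) n } := by
  have hnn (j : ℕ) : 0 ≤ a (j + 1) := (hpos j).le
  have hs : Summable a := (summable_nat_add_iff 1).mp <| by
    by_contra h
    simp [tsum_eq_zero_of_not_summable h] at hsum
  set ζ := Complex.exp (2 * Real.pi * Complex.I / (n + 1))
  have hζ : IsPrimitiveRoot ζ (n + 1) := by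
    simpa using Complex.isPrimitiveRoot_exp (n + 1) n.add_one_ne_zero
  have hpts (k : ℕ) : Complex.exp (2 * Real.pi * Complex.I * (k + 1) / (n + 1)) = ζ ^ (k + 1) := by
    rw [← Complex.exp_nat_mul]
    push_cast
    ring_nf
  simp only [hpts]
  have hterm (j : ℕ) : 0 ≤ a ((j + 1) * (n + 1)) := by
    simpa [show (j + 1) * (n + 1) = j * (n + 1) + n + 1 by ring] using hnn (j * (n + 1) + n)
  have hroots := hζ.mul_le_szegoE2 (tsum_nonneg hterm) fun k =>
    tsum_le_tsum_residue hmono hs (Nat.lt_succ_iff.mp k.is_lt)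
  have hsup := szegoE2_le_sSup (n := n) hnn hsum (l := fun j => ζ ^ (j + 1))
    fun j => by simp [norm_pow, hζ.norm'_eq_one n.add_one_ne_zero]
  rw [sum_smul_dirac_pow_succ_eq_sum_fin hζ.pow_eq_one hnn hs] at hsup
  have haS : a (n + 1) ≤ ∑' j : ℕ, a ((j + 1) * (n + 1)) := by
    simpa using (hs.comp_succ_mul n.add_one_ne_zero).le_tsum 0 fun j _ => hterm j
  exact ⟨hroots, hroots.trans hsup,
    (mul_le_mul_of_nonneg_left haS (by positivity)).trans (hroots.trans hsup)⟩
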